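/- arXiv:0801.0622 — 4 statements merged into one kernel-verified Lean document; each statement's English description precedes it below -/
import Mathlib

section
/- Let V ∈ Matrix (Fin 4) (Fin 4) ℝ satisfy Vᵀ * η + η * V = 0. Then the matrix W := (1/4) • Σ_{k, m ∈ Fin 4} (V k m : ℂ) • (σ k * (G m)ᵀ) ∈ Matrix (Fin 2) (Fin 2) ℂ has trace W = 0; equivalently, the lowered matrix Wᵀ * d is symmetric. (This is equation (8.4) of Theorem 8.1: the Kosmann-Lie derivative of the skew-symmetric spinor metric vanishes, ℒ_X(d) = 0, where W is given by formula (7.29).) -/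
open Matrix Complex

/-- The Minkowski matrix `diag(1, -1, -1, -1)`. -/
noncomputable def η : Matrix (Fin 4) (Fin 4) ℝ := Matrix.diagonal ![1, -1, -1, -1]

/-- The Pauli matrices. -/
noncomputable def σ : Fin 4 → Matrix (Fin 2) (Fin 2) ℂ :=
  ![!![1, 0; 0, 1], !![0, 1; 1, 0], !![0, -I; I, 0], !![1, 0; 0, -1]]

/-- The skew-symmetric spinor metric `d`. -/
noncomputable def d : Matrix (Fin 2) (Fin 2) ℂ := !![0, 1; -1, 0]

/-- The inverse Infeld–van der Waerden matrices. -/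
noncomputable def G : Fin 4 → Matrix (Fin 2) (Fin 2) ℂ :=
  fun m => (η m m : ℂ) • (dᵀ * σ m * d)

/-- A traceless 2×2 matrix has zero trace (entrywise form). -/
lemma aux_trace (W : Matrix (Fin 2) (Fin 2) ℂ) (h : W 0 0 + W 1 1 = 0) :
    W.trace = 0 := by
  simpa [Matrix.trace, Matrix.diag, Fin.sum_univ_two] using h

/-- For a traceless 2×2 matrix `W`, the lowered matrix `Wᵀ * d` is symmetric. -/
lemma aux_symm (W : Matrix (Fin 2) (Fin 2) ℂ) (h : W 0 0 + W 1 1 = 0) :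
    (Wᵀ * d).IsSymm := by
  rw [Matrix.IsSymm]
  ext i j
  fin_cases i <;> fin_cases j <;>
    simp [Matrix.mul_apply, Fin.sum_univ_two, d]
  · linear_combination -h
  · linear_combination h

/-- Equation (8.4) of Theorem 8.1: the Kosmann-Lie derivative of the skew-symmetric
spinor metric vanishes; the matrix `W` of formula (7.29) built from an
`η`-antisymmetric `V` is traceless, i.e. its lowered matrix `Wᵀ * d` is symmetric. -/
theorem kosmann_lie_derivative_of_spinor_metric_vanishes
    (V : Matrix (Fin 4) (Fin 4) ℝ)
    (hV : Vᵀ * η + η * V = 0) :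
    ((1/4 : ℂ) • ∑ k : Fin 4, ∑ m : Fin 4,
        (V k m : ℂ) • (σ k * (G m)ᵀ)).trace = 0
    ∧ (((1/4 : ℂ) • ∑ k : Fin 4, ∑ m : Fin 4,
        (V k m : ℂ) • (σ k * (G m)ᵀ))ᵀ * d).IsSymm := by
  have h : ∀ i j : Fin 4, V j i * ![1,-1,-1,-1] j + ![1,-1,-1,-1] i * V i j = 0 := by
    intro i j
    have := congrFun (congrFun hV i) j
    simpa [η, Matrix.mul_diagonal, Matrix.diagonal_mul, Matrix.add_apply,
      Matrix.transpose_apply] using this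
  have c : ∀ i : Fin 4, (V i i : ℂ) = 0 := by
    intro i
    have := h i i
    fin_cases i <;>
    · norm_num [Matrix.cons_val_zero, Matrix.cons_val_one, Matrix.head_cons] at this
      exact_mod_cast this
  have hsum : ((1/4 : ℂ) • ∑ k : Fin 4, ∑ m : Fin 4,
      (V k m : ℂ) • (σ k * (G m)ᵀ)) 0 0 +
      ((1/4 : ℂ) • ∑ k : Fin 4, ∑ m : Fin 4,
      (V k m : ℂ) • (σ k * (G m)ᵀ)) 1 1 = 0 := by
    simp only [σ, G, η, d, Fin.sum_univ_four, Fin.sum_univ_two,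
      Matrix.smul_apply, Matrix.add_apply, Matrix.mul_apply, Matrix.transpose_apply,
      Matrix.diagonal_apply, Matrix.cons_val', Matrix.cons_val_zero, Matrix.cons_val_one,
      Matrix.head_cons, Matrix.head_fin_const, Matrix.cons_val_fin_one, Matrix.empty_val',
      Matrix.sum_apply, smul_eq_mul]
    norm_num [Matrix.cons_val_two, Matrix.cons_val_three, Matrix.tail_cons, Matrix.head_cons]
    linear_combination (1/2 : ℂ) * c 0 + (1/2 : ℂ) * c 1 + (1/2 : ℂ) * c 2 + (1/2 : ℂ) * c 3
  exact ⟨aux_trace _ hsum, aux_symm _ hsum⟩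
end

section
/- Let V ∈ Matrix (Fin 4) (Fin 4) ℝ satisfy Vᵀ * η + η * V = 0, and let W := (1/4) • Σ_{k, m ∈ Fin 4} (V k m : ℂ) • (σ k * (G m)ᵀ) ∈ Matrix (Fin 2) (Fin 2) ℂ. Then for every m ∈ Fin 4: W * σ m + σ m * Wᴴ = Σ_{k ∈ Fin 4} (V k m : ℂ) • σ k, where Wᴴ is the conjugate transpose of W. (This is equation (8.5) of Theorem 8.1: the Kosmann-Lie derivative of the Infeld–van der Waerden field vanishes, ℒ_X(G) = 0; equivalently the matrix W of formula (7.29) solves the infinitesimal intertwining relation (7.22).) -/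
open Matrix Complex

private lemma d_transpose_aux : dᵀ = !![0, -1; 1, 0] := by
  ext i j; fin_cases i <;> fin_cases j <;> simp [d]

private lemma G_transpose_aux : ∀ m, (G m)ᵀ = σ m := by
  intro m
  fin_cases m <;>
  · ext i j
    fin_cases i <;> fin_cases j <;>
      simp [G, σ, d_transpose_aux, d, η, Matrix.mul_apply, Fin.sum_univ_two,
        Matrix.diagonal, Matrix.transpose_apply, Matrix.vecHead, Matrix.vecTail]

set_option maxHeartbeats 1600000 in
/-- Equation (8.5) of Theorem 8.1: the Kosmann-Lie derivative of the Infeld–van der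
Waerden field vanishes; the matrix `W` of formula (7.29) solves the infinitesimal
intertwining relation (7.22). -/
theorem kosmann_lie_derivative_of_infeld_van_der_waerden_vanishes
    (V : Matrix (Fin 4) (Fin 4) ℝ)
    (hV : Vᵀ * η + η * V = 0)
    (W : Matrix (Fin 2) (Fin 2) ℂ)
    (hW : W = (1/4 : ℂ) • ∑ k : Fin 4, ∑ m : Fin 4, (V k m : ℂ) • (σ k * (G m)ᵀ)) :
    ∀ m : Fin 4, W * σ m + σ m * Wᴴ = ∑ k : Fin 4, (V k m : ℂ) • σ k := by
  have hE : ∀ i j : Fin 4, V j i * η j j + η i i * V i j = 0 := by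
    intro i j
    have := congrFun (congrFun hV i) j
    simpa [Matrix.add_apply, Matrix.mul_apply, η, Matrix.diagonal, Fin.sum_univ_four,
      Matrix.transpose_apply, mul_comm] using this
  have h00 : V 0 0 = 0 := by have := hE 0 0; simp [η] at this; linarith
  have h11 : V 1 1 = 0 := by have := hE 1 1; simp [η] at this; linarith
  have h22 : V 2 2 = 0 := by have := hE 2 2; simp [η] at this; linarith
  have h33 : V 3 3 = 0 := by have := hE 3 3; simp [η] at this; linarith
  have h01 : V 1 0 = V 0 1 := by have := hE 0 1; simp [η] at this; linarith
  have h02 : V 2 0 = V 0 2 := by have := hE 0 2; simp [η] at this; linarith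
  have h03 : V 3 0 = V 0 3 := by have := hE 0 3; simp [η] at this; linarith
  have h12 : V 2 1 = -V 1 2 := by have := hE 1 2; simp [η] at this; linarith
  have h13 : V 3 1 = -V 1 3 := by have := hE 1 3; simp [η] at this; linarith
  have h23 : V 3 2 = -V 2 3 := by have := hE 2 3; simp [η] at this; linarith
  have hWm : W = !![((V 0 3 : ℂ) + I * (V 1 2 : ℂ))/2,
      ((V 0 1 : ℂ) - (V 1 3 : ℂ) + I * ((V 2 3 : ℂ) - (V 0 2 : ℂ)))/2;
      ((V 0 1 : ℂ) + (V 1 3 : ℂ) + I * ((V 2 3 : ℂ) + (V 0 2 : ℂ)))/2,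
      -(((V 0 3 : ℂ) + I * (V 1 2 : ℂ))/2)] := by
    rw [hW]
    simp only [G_transpose_aux]
    ext i j
    fin_cases i <;> fin_cases j <;>
    · simp [Fin.sum_univ_four, σ, Matrix.mul_apply, Fin.sum_univ_two, Matrix.smul_apply,
        Matrix.add_apply, Matrix.sum_apply, Matrix.vecHead, Matrix.vecTail]
      simp only [h00, h11, h22, h33, h01, h02, h03, h12, h13, h23]
      push_cast
      first
      | ring1
      | (simp only [Complex.I_sq]; ring1)
      | (ring_nf; simp only [Complex.I_sq]; ring_nf)
  clear hW hE hV
  intro m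
  have hConj : Wᴴ = !![(starRingEnd ℂ) (W 0 0), (starRingEnd ℂ) (W 1 0);
      (starRingEnd ℂ) (W 0 1), (starRingEnd ℂ) (W 1 1)] := by
    ext i j; fin_cases i <;> fin_cases j <;> simp [Matrix.conjTranspose_apply]
  rw [hConj, hWm]
  fin_cases m <;>
  · ext i j
    fin_cases i <;> fin_cases j <;>
    · try simp [Fin.sum_univ_four, σ, Matrix.mul_apply, Fin.sum_univ_two, Matrix.smul_apply,
        Matrix.add_apply, Matrix.sum_apply, Matrix.vecHead, Matrix.vecTail,
        Complex.conj_ofReal, _root_.map_add, _root_.map_sub, _root_.map_mul, map_div₀,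
        _root_.map_neg, map_ofNat, Complex.conj_I]
      try simp only [h00, h11, h22, h33, h01, h02, h03, h12, h13, h23]
      push_cast
      first
      | ring1
      | (simp only [Complex.I_sq]; ring1)
      | (ring_nf; simp only [Complex.I_sq]; ring_nf)
end

section
/- Let E = EuclideanSpace ℝ (Fin 4) and U ⊆ E open. Let Υ : Fin 4 → E → E be C¹ vector fields and c : Fin 4 → Fin 4 → Fin 4 → E → ℝ functions such that at every p ∈ U and all i, j ∈ Fin 4: lieBracket ℝ (Υ i) (Υ j) p = Σ_{k} c k i j p • Υ k p, and let ηf : Fin 4 → E → (E →L[ℝ] ℝ) be C¹ with ηf i p (Υ j p) = (if i = j then 1 else 0) on U. Let Xc : Fin 4 → E → ℝ and Yc : Fin 4 → E → ℝ be C¹, set X q = Σ_i Xc i q • Υ i q and ω q = Σ_i Yc i q • ηf i q. Then for every k ∈ Fin 4 and p ∈ U: fderiv ℝ (fun q => ω q (Υ k q)) p (X p) − ω p (lieBracket ℝ X (Υ k) p) = Σ_i Xc i p · fderiv ℝ (Yc k) p (Υ i p) + Σ_i Yc i p · fderiv ℝ (Xc i) p (Υ k p) − Σ_{i,j} Xc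 i p · Yc j p · c j i k p. (Formula (3.10): the components of the Lie derivative of a covector field in a non-holonomic frame.) -/
open VectorField

/-- Formula (3.10): the components of the Lie derivative of a covector field
in a non-holonomic frame. -/
theorem lie_derivative_covector_components_in_nonholonomic_frame
    (U : Set (EuclideanSpace ℝ (Fin 4))) (hU : IsOpen U)
    (Υ : Fin 4 → EuclideanSpace ℝ (Fin 4) → EuclideanSpace ℝ (Fin 4))
    (hΥ : ∀ i, ContDiff ℝ 1 (Υ i))
    (c : Fin 4 → Fin 4 → Fin 4 → EuclideanSpace ℝ (Fin 4) → ℝ)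
    (hc : ∀ p ∈ U, ∀ i j, lieBracket ℝ (Υ i) (Υ j) p = ∑ k, c k i j p • Υ k p)
    (ηf : Fin 4 → EuclideanSpace ℝ (Fin 4) → (EuclideanSpace ℝ (Fin 4) →L[ℝ] ℝ))
    (hηf : ∀ i, ContDiff ℝ 1 (ηf i))
    (hdual : ∀ p ∈ U, ∀ i j, ηf i p (Υ j p) = if i = j then (1 : ℝ) else 0)
    (Xc Yc : Fin 4 → EuclideanSpace ℝ (Fin 4) → ℝ)
    (hXc : ∀ i, ContDiff ℝ 1 (Xc i)) (hYc : ∀ i, ContDiff ℝ 1 (Yc i))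
    (X : EuclideanSpace ℝ (Fin 4) → EuclideanSpace ℝ (Fin 4))
    (hX : ∀ q, X q = ∑ i, Xc i q • Υ i q)
    (ω : EuclideanSpace ℝ (Fin 4) → (EuclideanSpace ℝ (Fin 4) →L[ℝ] ℝ))
    (hω : ∀ q, ω q = ∑ i, Yc i q • ηf i q) :
    ∀ k, ∀ p ∈ U,
      fderiv ℝ (fun q => ω q (Υ k q)) p (X p) - ω p (lieBracket ℝ X (Υ k) p)
      = (∑ i, Xc i p * fderiv ℝ (Yc k) p (Υ i p))
        + (∑ i, Yc i p * fderiv ℝ (Xc i) p (Υ k p))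
        - ∑ i, ∑ j, Xc i p * Yc j p * c j i k p := by
  intro k p hp
  have hdΥ : ∀ i (q : EuclideanSpace ℝ (Fin 4)), DifferentiableAt ℝ (Υ i) q :=
    fun i q => ((hΥ i).differentiable one_ne_zero).differentiableAt
  have hdXc : ∀ i (q : EuclideanSpace ℝ (Fin 4)), DifferentiableAt ℝ (Xc i) q :=
    fun i q => ((hXc i).differentiable one_ne_zero).differentiableAt
  have hXe : X = fun q => ∑ i, Xc i q • Υ i q := funext hX
  subst hXe
  have hωe : ω = fun q => ∑ i, Yc i q • ηf i q := funext hω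
  subst hωe
  beta_reduce
  -- Step 1: the function q ↦ ω q (Υ k q) equals Yc k near p
  have hev : (fun q => (∑ i, Yc i q • ηf i q :
      EuclideanSpace ℝ (Fin 4) →L[ℝ] ℝ) (Υ k q)) =ᶠ[nhds p] Yc k := by
    filter_upwards [hU.mem_nhds hp] with q hq
    simp [ContinuousLinearMap.sum_apply, hdual q hq, mul_ite]
  have h1 : fderiv ℝ (fun q => (∑ i, Yc i q • ηf i q :
      EuclideanSpace ℝ (Fin 4) →L[ℝ] ℝ) (Υ k q)) p = fderiv ℝ (Yc k) p :=
    hev.fderiv_eq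
  -- Step 2: derivative of the vector field X
  have hF : fderiv ℝ (fun q => ∑ i, Xc i q • Υ i q) p
      = ∑ i, (Xc i p • fderiv ℝ (Υ i) p + (fderiv ℝ (Xc i) p).smulRight (Υ i p)) := by
    rw [fderiv_fun_sum (A := fun i q => Xc i q • Υ i q) (fun i _ => (hdXc i p).smul (hdΥ i p))]
    exact Finset.sum_congr rfl fun i _ => fderiv_fun_smul (hdXc i p) (hdΥ i p)
  -- Step 3: the Lie bracket
  have hbr : lieBracket ℝ (fun q => ∑ i, Xc i q • Υ i q) (Υ k) p
      = ∑ i, (Xc i p • lieBracket ℝ (Υ i) (Υ k) p - fderiv ℝ (Xc i) p (Υ k p) • Υ i p) := by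
    simp only [lieBracket, hF, ContinuousLinearMap.sum_apply, ContinuousLinearMap.add_apply,
      ContinuousLinearMap.coe_smul', Pi.smul_apply, ContinuousLinearMap.smulRight_apply,
      map_sum, map_smul]
    rw [← Finset.sum_sub_distrib]
    refine Finset.sum_congr rfl fun i _ => ?_
    simp only [lieBracket, smul_sub]
    abel
  -- Step 4: apply ω to the bracket
  have hωbr : (∑ j, Yc j p • ηf j p : EuclideanSpace ℝ (Fin 4) →L[ℝ] ℝ)
        (lieBracket ℝ (fun q => ∑ i, Xc i q • Υ i q) (Υ k) p)
      = (∑ i, ∑ j, Xc i p * Yc j p * c j i k p)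
        - ∑ i, Yc i p * fderiv ℝ (Xc i) p (Υ k p) := by
    rw [hbr]
    simp only [ContinuousLinearMap.sum_apply, ContinuousLinearMap.coe_smul', Pi.smul_apply,
      map_sum, map_sub, map_smul]
    simp only [hc p hp, map_sum, map_smul, hdual p hp, smul_eq_mul, mul_ite, mul_one, mul_zero,
      Finset.sum_ite_eq, Finset.sum_ite_eq', Finset.mem_univ, if_true]
    rw [Finset.sum_sub_distrib]
    congr 1
    · refine Finset.sum_congr rfl fun i _ => ?_
      rw [Finset.mul_sum]
      exact Finset.sum_congr rfl fun j _ => by ring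
    · exact Finset.sum_congr rfl fun i _ => by ring
  rw [h1, hωbr]
  have h2 : fderiv ℝ (Yc k) p (∑ i, Xc i p • Υ i p)
      = ∑ i, Xc i p * fderiv ℝ (Yc k) p (Υ i p) := by
    rw [map_sum]; simp [smul_eq_mul]
  rw [h2]; ring
end

section
/- Let E = EuclideanSpace ℝ (Fin 4) and U ⊆ E open, with frame Υ, commutation coefficients c and dual coframe ηf as above (lieBracket ℝ (Υ i) (Υ j) p = Σ_k c k i j p • Υ k p and ηf i p (Υ j p) = δ_{ij} on U). Let Xc : Fin 4 → E → ℝ be C¹ with X q = Σ_i Xc i q • Υ i q, and let T : E → (E →L[ℝ] E) be a C¹ field of endomorphisms with frame components Tc i j p := ηf i p (T p (Υ j p)). Then for every C¹ vector field Z : E → E and every p ∈ U: lieBracket ℝ X (fun q => T q (Z q)) p − T p (lieBracket ℝ X Z p) = Σ_{i} ( Σ_{j} [ Σ_k Xc k p · fderiv ℝ (fun q => Tc i j q) p (Υ k p) + Σ_k (fderiv ℝ (Xc k) p (Υ j p) − Σ_m c k m j p · Xc m p) · Tc i k p − Σ_k (fderiv ℝ (Xc i) p (Υ k p) − Σ_m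 c i m k p · Xc m p) · Tc k j p ] · ηf j p (Z p) ) • Υ i p. (Formula (3.11) specialized to a tensor field of type (1,1): the Lie derivative L_X T, characterized by (L_X T)(Z) = [X, T(Z)] − T([X,Z]), has the stated components in a non-holonomic frame.) -/
open VectorField

set_option maxHeartbeats 2000000

/-- Formula (3.11) specialized to a tensor field of type (1,1): the Lie derivative
`L_X T`, characterized by `(L_X T)(Z) = [X, T(Z)] − T([X,Z])`, has the stated
components in a non-holonomic frame. -/
theorem lie_derivative_endomorphism_components_in_nonholonomic_frame
    (U : Set (EuclideanSpace ℝ (Fin 4))) (hU : IsOpen U)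
    (Υ : Fin 4 → EuclideanSpace ℝ (Fin 4) → EuclideanSpace ℝ (Fin 4))
    (hΥ : ∀ i, ContDiff ℝ 1 (Υ i))
    (c : Fin 4 → Fin 4 → Fin 4 → EuclideanSpace ℝ (Fin 4) → ℝ)
    (hc : ∀ p ∈ U, ∀ i j, lieBracket ℝ (Υ i) (Υ j) p = ∑ k, c k i j p • Υ k p)
    (ηf : Fin 4 → EuclideanSpace ℝ (Fin 4) → (EuclideanSpace ℝ (Fin 4) →L[ℝ] ℝ))
    (hηf : ∀ i, ContDiff ℝ 1 (ηf i))
    (hdual : ∀ p ∈ U, ∀ i j, ηf i p (Υ j p) = if i = j then (1 : ℝ) else 0)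
    (Xc : Fin 4 → EuclideanSpace ℝ (Fin 4) → ℝ)
    (hXc : ∀ i, ContDiff ℝ 1 (Xc i))
    (X : EuclideanSpace ℝ (Fin 4) → EuclideanSpace ℝ (Fin 4))
    (hX : ∀ q, X q = ∑ i, Xc i q • Υ i q)
    (T : EuclideanSpace ℝ (Fin 4) →
      (EuclideanSpace ℝ (Fin 4) →L[ℝ] EuclideanSpace ℝ (Fin 4)))
    (hT : ContDiff ℝ 1 T)
    (Tc : Fin 4 → Fin 4 → EuclideanSpace ℝ (Fin 4) → ℝ)
    (hTc : ∀ i j p, Tc i j p = ηf i p (T p (Υ j p)))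
    (Z : EuclideanSpace ℝ (Fin 4) → EuclideanSpace ℝ (Fin 4))
    (hZ : ContDiff ℝ 1 Z) :
    ∀ p ∈ U,
      lieBracket ℝ X (fun q => T q (Z q)) p - T p (lieBracket ℝ X Z p)
      = ∑ i, (∑ j,
          ((∑ k, Xc k p * fderiv ℝ (fun q => Tc i j q) p (Υ k p))
            + (∑ k, (fderiv ℝ (Xc k) p (Υ j p)
                - ∑ m, c k m j p * Xc m p) * Tc i k p)
            - (∑ k, (fderiv ℝ (Xc i) p (Υ k p)
                - ∑ m, c i m k p * Xc m p) * Tc k j p))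
          * ηf j p (Z p)) • Υ i p := by
  intro p hp
  classical
  have hΥd : ∀ i, DifferentiableAt ℝ (Υ i) p := fun i => ((hΥ i).differentiable one_ne_zero) p
  have hηd : ∀ i, DifferentiableAt ℝ (ηf i) p := fun i => ((hηf i).differentiable one_ne_zero) p
  have hXcd : ∀ i, DifferentiableAt ℝ (Xc i) p := fun i => ((hXc i).differentiable one_ne_zero) p
  have hTd : DifferentiableAt ℝ T p := (hT.differentiable one_ne_zero) p
  have hZd : DifferentiableAt ℝ Z p := (hZ.differentiable one_ne_zero) p
  have hdual' := hdual p hp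
  -- basis expansion
  have hindep : LinearIndependent ℝ (fun j => Υ j p) := by
    rw [Fintype.linearIndependent_iff]
    intro g hg i
    have h := congrArg (ηf i p) hg
    simpa [map_sum, map_smul, hdual', smul_eq_mul, mul_ite, Finset.sum_ite_eq] using h
  have hcard : Fintype.card (Fin 4) = Module.finrank ℝ (EuclideanSpace ℝ (Fin 4)) := by
    simp [finrank_euclideanSpace_fin]
  let b := basisOfLinearIndependentOfCardEqFinrank hindep hcard
  have hb : ∀ j, b j = Υ j p := fun j =>
    congrFun (coe_basisOfLinearIndependentOfCardEqFinrank hindep hcard) j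
  have hexp : ∀ v : EuclideanSpace ℝ (Fin 4), ∑ j, ηf j p v • Υ j p = v := by
    intro v
    have hrepr : ∀ i, ηf i p v = b.repr v i := by
      intro i
      conv_lhs => rw [← b.sum_repr v]
      simp [hb, map_sum, map_smul, hdual', mul_ite, Finset.sum_ite_eq]
    calc ∑ j, ηf j p v • Υ j p = ∑ j, b.repr v j • b j := by
          refine Finset.sum_congr rfl fun j _ => by rw [hrepr, hb]
      _ = v := b.sum_repr v
  have hext : ∀ v w : EuclideanSpace ℝ (Fin 4), (∀ i, ηf i p v = ηf i p w) → v = w := by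
    intro v w h
    rw [← hexp v, ← hexp w]
    exact Finset.sum_congr rfl fun i _ => by rw [h]
  -- derivative facts
  have hU' : U ∈ nhds p := hU.mem_nhds hp
  have h3 : ∀ i j (v : EuclideanSpace ℝ (Fin 4)),
      (fderiv ℝ (ηf i) p v) (Υ j p) = - ηf i p (fderiv ℝ (Υ j) p v) := by
    intro i j v
    have hev : (fun q => ηf i q (Υ j q)) =ᶠ[nhds p] (fun _ => if i = j then (1:ℝ) else 0) :=
      Filter.eventuallyEq_of_mem hU' fun q hq => hdual q hq i j
    have h0 : fderiv ℝ (fun q => ηf i q (Υ j q)) p = 0 := by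
      rw [hev.fderiv_eq]; exact fderiv_const_apply _
    have h1 : fderiv ℝ (fun q => ηf i q (Υ j q)) p
        = (ηf i p).comp (fderiv ℝ (Υ j) p) + (fderiv ℝ (ηf i) p).flip (Υ j p) :=
      fderiv_clm_apply (hηd i) (hΥd j)
    have h2 := congrFun (congrArg DFunLike.coe (h1.symm.trans h0)) v
    simp only [ContinuousLinearMap.add_apply, ContinuousLinearMap.comp_apply,
      ContinuousLinearMap.flip_apply, ContinuousLinearMap.zero_apply] at h2
    linarith
  have hfX : fderiv ℝ X p = fderiv ℝ (fun q => ∑ k, Xc k q • Υ k q) p :=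
    congrArg (fun f => fderiv ℝ f p) (funext hX)
  have hA : ∀ v : EuclideanSpace ℝ (Fin 4), fderiv ℝ X p v
      = ∑ k, (Xc k p • fderiv ℝ (Υ k) p v + (fderiv ℝ (Xc k) p v) • Υ k p) := by
    intro v
    rw [hfX, fderiv_fun_sum (fun k _ => ((hXcd k).fun_smul (hΥd k)))]
    rw [ContinuousLinearMap.sum_apply]
    refine Finset.sum_congr rfl fun k _ => ?_
    rw [fderiv_fun_smul (hXcd k) (hΥd k)]
    simp [ContinuousLinearMap.add_apply, ContinuousLinearMap.smul_apply,
      ContinuousLinearMap.smulRight_apply]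
  have hXd : DifferentiableAt ℝ X p := by
    have : DifferentiableAt ℝ (fun q => ∑ k, Xc k q • Υ k q) p :=
      DifferentiableAt.fun_sum (fun k _ => (hXcd k).fun_smul (hΥd k))
    exact this.congr_of_eventuallyEq (Filter.Eventually.of_forall fun q => hX q)
  -- product rule for Tc
  have hTU : ∀ j₀, DifferentiableAt ℝ (fun q => T q (Υ j₀ q)) p := fun j₀ =>
    hTd.clm_apply (hΥd j₀)
  have hP : ∀ i₀ j₀ (v : EuclideanSpace ℝ (Fin 4)),
      fderiv ℝ (fun q => Tc i₀ j₀ q) p v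
        = ηf i₀ p ((fderiv ℝ T p v) (Υ j₀ p)) + ηf i₀ p (T p (fderiv ℝ (Υ j₀) p v))
          + (fderiv ℝ (ηf i₀) p v) (T p (Υ j₀ p)) := by
    intro i₀ j₀ v
    have heq : (fun q => Tc i₀ j₀ q) = fun q => ηf i₀ q (T q (Υ j₀ q)) :=
      funext fun q => hTc i₀ j₀ q
    rw [heq, fderiv_clm_apply (hηd i₀) (hTU j₀), fderiv_clm_apply hTd (hΥd j₀)]
    simp only [ContinuousLinearMap.add_apply, ContinuousLinearMap.comp_apply,
      ContinuousLinearMap.flip_apply, map_add]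
    ring
  -- component helpers
  have hTcomp : ∀ (a : Fin 4) (w : EuclideanSpace ℝ (Fin 4)),
      ηf a p (T p w) = ∑ s, ηf s p w * ηf a p (T p (Υ s p)) := by
    intro a w
    conv_lhs => rw [← hexp w]
    simp [map_sum, map_smul, smul_eq_mul]
  have hflipW : ∀ (a : Fin 4) (v w : EuclideanSpace ℝ (Fin 4)),
      (fderiv ℝ (ηf a) p v) w = - ∑ m, ηf m p w * ηf a p (fderiv ℝ (Υ m) p v) := by
    intro a v w
    conv_lhs => rw [← hexp w]
    simp [map_sum, map_smul, smul_eq_mul, h3, Finset.sum_neg_distrib]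
  have hAcomp : ∀ (a : Fin 4) (v : EuclideanSpace ℝ (Fin 4)),
      ηf a p (fderiv ℝ X p v)
        = fderiv ℝ (Xc a) p v + ∑ k, Xc k p * ηf a p (fderiv ℝ (Υ k) p v) := by
    intro a v
    rw [hA v]
    simp [map_sum, map_add, map_smul, hdual', smul_eq_mul, mul_ite,
      Finset.sum_add_distrib, Finset.sum_ite_eq, add_comm]
  have hc' : ∀ s a b : Fin 4, c s a b p
      = ηf s p (fderiv ℝ (Υ b) p (Υ a p)) - ηf s p (fderiv ℝ (Υ a) p (Υ b p)) := by
    intro s a b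
    have h := hc p hp a b
    have h' : fderiv ℝ (Υ b) p (Υ a p) - fderiv ℝ (Υ a) p (Υ b p)
        = ∑ k, c k a b p • Υ k p := h
    have h2 := congrArg (ηf s p) h'
    simp only [map_sub, map_sum, map_smul, hdual', smul_eq_mul, mul_ite, mul_one,
      mul_zero, Finset.sum_ite_eq, Finset.mem_univ, if_true] at h2
    linarith
  -- the core computation on frame vectors
  have key0 : ∀ j : Fin 4,
      fderiv ℝ T p (X p) (Υ j p) - fderiv ℝ X p (T p (Υ j p)) + T p (fderiv ℝ X p (Υ j p))
      = ∑ i, (((∑ k, Xc k p * fderiv ℝ (fun q => Tc i j q) p (Υ k p))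
            + (∑ k, (fderiv ℝ (Xc k) p (Υ j p)
                - ∑ m, c k m j p * Xc m p) * Tc i k p)
            - (∑ k, (fderiv ℝ (Xc i) p (Υ k p)
                - ∑ m, c i m k p * Xc m p) * Tc k j p))) • Υ i p := by
    intro j
    apply hext
    intro i
    have hRHS : ηf i p (∑ i', (((∑ k, Xc k p * fderiv ℝ (fun q => Tc i' j q) p (Υ k p))
            + (∑ k, (fderiv ℝ (Xc k) p (Υ j p)
                - ∑ m, c k m j p * Xc m p) * Tc i' k p)
            - (∑ k, (fderiv ℝ (Xc i') p (Υ k p)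
                - ∑ m, c i' m k p * Xc m p) * Tc k j p))) • Υ i' p)
        = ((∑ k, Xc k p * fderiv ℝ (fun q => Tc i j q) p (Υ k p))
            + (∑ k, (fderiv ℝ (Xc k) p (Υ j p)
                - ∑ m, c k m j p * Xc m p) * Tc i k p)
            - (∑ k, (fderiv ℝ (Xc i) p (Υ k p)
                - ∑ m, c i m k p * Xc m p) * Tc k j p)) := by
      simp [map_sum, map_smul, hdual', smul_eq_mul, mul_ite, Finset.sum_ite_eq]
    rw [hRHS, map_add, map_sub]
    -- term 1
    have e1 : fderiv ℝ T p (X p) (Υ j p)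
        = ∑ k, Xc k p • (fderiv ℝ T p (Υ k p) (Υ j p)) := by
      rw [hX p]
      simp [map_sum, map_smul, ContinuousLinearMap.sum_apply, ContinuousLinearMap.smul_apply]
    have e2 : ∀ k, ηf i p (fderiv ℝ T p (Υ k p) (Υ j p))
        = fderiv ℝ (fun q => Tc i j q) p (Υ k p)
          - ηf i p (T p (fderiv ℝ (Υ j) p (Υ k p)))
          - (fderiv ℝ (ηf i) p (Υ k p)) (T p (Υ j p)) := by
      intro k
      have := hP i j (Υ k p)
      linarith
    have t1 : ηf i p (fderiv ℝ T p (X p) (Υ j p))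
        = ∑ k, Xc k p * (fderiv ℝ (fun q => Tc i j q) p (Υ k p)
            - (∑ s, ηf s p (fderiv ℝ (Υ j) p (Υ k p)) * ηf i p (T p (Υ s p)))
            + ∑ m, ηf m p (T p (Υ j p)) * ηf i p (fderiv ℝ (Υ m) p (Υ k p))) := by
      rw [e1, map_sum]
      refine Finset.sum_congr rfl fun k _ => ?_
      rw [map_smul, smul_eq_mul, e2 k, hTcomp i (fderiv ℝ (Υ j) p (Υ k p)),
        hflipW i (Υ k p) (T p (Υ j p))]
      ring
    -- term 2
    have t2 : ηf i p (fderiv ℝ X p (T p (Υ j p)))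
        = ∑ m, ηf m p (T p (Υ j p)) * (fderiv ℝ (Xc i) p (Υ m p)
            + ∑ k, Xc k p * ηf i p (fderiv ℝ (Υ k) p (Υ m p))) := by
      conv_lhs => rw [← hexp (T p (Υ j p))]
      rw [map_sum, map_sum]
      refine Finset.sum_congr rfl fun m _ => ?_
      rw [map_smul, map_smul, smul_eq_mul, hAcomp i (Υ m p)]
    -- term 3
    have t3 : ηf i p (T p (fderiv ℝ X p (Υ j p)))
        = ∑ k, (Xc k p * (∑ s, ηf s p (fderiv ℝ (Υ k) p (Υ j p)) * ηf i p (T p (Υ s p)))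
            + fderiv ℝ (Xc k) p (Υ j p) * ηf i p (T p (Υ k p))) := by
      rw [hA (Υ j p), map_sum, map_sum]
      refine Finset.sum_congr rfl fun k _ => ?_
      simp only [map_add, map_smul, smul_eq_mul]
      rw [hTcomp i (fderiv ℝ (Υ k) p (Υ j p))]
    rw [t1, t2, t3]
    simp only [hc', hTc]
    simp only [Fin.sum_univ_four]
    ring
  -- linearity in the argument vector
  have key : ∀ v : EuclideanSpace ℝ (Fin 4),
      fderiv ℝ T p (X p) v - fderiv ℝ X p (T p v) + T p (fderiv ℝ X p v)
      = ∑ i, (∑ j,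
          ((∑ k, Xc k p * fderiv ℝ (fun q => Tc i j q) p (Υ k p))
            + (∑ k, (fderiv ℝ (Xc k) p (Υ j p)
                - ∑ m, c k m j p * Xc m p) * Tc i k p)
            - (∑ k, (fderiv ℝ (Xc i) p (Υ k p)
                - ∑ m, c i m k p * Xc m p) * Tc k j p))
          * ηf j p v) • Υ i p := by
    intro v
    conv_lhs => rw [← hexp v]
    simp only [map_sum, map_smul]
    rw [← Finset.sum_sub_distrib, ← Finset.sum_add_distrib]
    have : ∀ j, ηf j p v • fderiv ℝ T p (X p) (Υ j p)
          - ηf j p v • fderiv ℝ X p (T p (Υ j p))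
          + ηf j p v • T p (fderiv ℝ X p (Υ j p))
        = ηf j p v • (fderiv ℝ T p (X p) (Υ j p) - fderiv ℝ X p (T p (Υ j p))
            + T p (fderiv ℝ X p (Υ j p))) := by
      intro j; rw [smul_add, smul_sub]
    simp only [this, key0]
    simp only [Finset.smul_sum, smul_smul]
    rw [Finset.sum_comm]
    refine Finset.sum_congr rfl fun i _ => ?_
    rw [Finset.sum_smul]
    refine Finset.sum_congr rfl fun j _ => ?_
    rw [mul_comm]
  -- reduce the Lie bracket expression
  have hTZd : DifferentiableAt ℝ (fun q => T q (Z q)) p := hTd.clm_apply hZd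
  have hbrk : lieBracket ℝ X (fun q => T q (Z q)) p - T p (lieBracket ℝ X Z p)
      = fderiv ℝ T p (X p) (Z p) - fderiv ℝ X p (T p (Z p)) + T p (fderiv ℝ X p (Z p)) := by
    simp only [lieBracket]
    rw [fderiv_clm_apply hTd hZd]
    simp only [ContinuousLinearMap.add_apply, ContinuousLinearMap.comp_apply,
      ContinuousLinearMap.flip_apply, map_sub]
    abel
  exact hbrk.trans (key (Z p))
end
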